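/- For odd k and n = m, the matching number of the k-subdivision of K_{m,m} equals m(k+1)/2 + m(m−1)(k−1)/2. -/

import Mathlib

open SimpleGraph

/-- The matching number: maximum size of a matching. -/
noncomputable def matchingNumber {V : Type*} (G : SimpleGraph V) : ℕ :=
  sSup {n | ∃ M : G.Subgraph, M.IsMatching ∧ M.edgeSet.ncard = n}

/-- The `m`-th distance power of a graph. -/
def graphPow {V : Type*} (G : SimpleGraph V) (m : ℕ) : SimpleGraph V where
  Adj x y := x ≠ y ∧ G.dist x y ≤ m
  symm := ⟨fun x y ⟨h1, h2⟩ => ⟨h1.symm, by rwa [SimpleGraph.dist_comm]⟩⟩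
  loopless := ⟨fun x h => h.1 rfl⟩

/-- The `n`-subdivision of a graph: each edge `xy` (with `x < y`) is replaced by a
path `x, (xy)_1, …, (xy)_{n-1}, y` of length `n`. -/
def subdivision {V : Type*} [LinearOrder V] (G : SimpleGraph V) (n : ℕ) :
    SimpleGraph (V ⊕ ({e : V × V // e.1 < e.2 ∧ G.Adj e.1 e.2} × Fin (n - 1))) where
  Adj u v :=
    match u, v with
    | .inl x, .inl y => n = 1 ∧ G.Adj x y
    | .inl x, .inr (e, i) => (i.val = 0 ∧ e.val.1 = x) ∨ (i.val = n - 2 ∧ e.val.2 = x)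
    | .inr (e, i), .inl x => (i.val = 0 ∧ e.val.1 = x) ∨ (i.val = n - 2 ∧ e.val.2 = x)
    | .inr (e, i), .inr (f, j) => e = f ∧ (i.val + 1 = j.val ∨ j.val + 1 = i.val)
  symm := by
    constructor
    rintro (x | ⟨e, i⟩) (y | ⟨f, j⟩) h
    · exact ⟨h.1, h.2.symm⟩
    · exact h
    · exact h
    · exact ⟨h.1.symm, h.2.symm⟩
  loopless := by
    constructor
    rintro (x | ⟨e, i⟩) h
    · exact G.loopless.irrefl x h.2
    · rcases h with ⟨-, h | h⟩ <;> omega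

/-- A matching is maximal if it cannot be extended to a larger matching. -/
def IsMaximalMatching {V : Type*} {G : SimpleGraph V} (M : G.Subgraph) : Prop :=
  M.IsMatching ∧
    ∀ M' : G.Subgraph, M'.IsMatching → M.edgeSet ⊆ M'.edgeSet → M.edgeSet = M'.edgeSet

/-- The saturation number: minimum size of a maximal matching. -/
noncomputable def satNumber {V : Type*} (G : SimpleGraph V) : ℕ :=
  sInf {n | ∃ M : G.Subgraph, IsMaximalMatching M ∧ M.edgeSet.ncard = n}

/-- The friendship graph `F_k`: `k` triangles sharing the common vertex `0`;
the `i`-th triangle has vertices `0, 2i+1, 2i+2`. -/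
def friendshipGraph (k : ℕ) : SimpleGraph (Fin (2 * k + 1)) :=
  SimpleGraph.fromRel (fun x y => x.val = 0 ∨ (x.val + 1 = y.val ∧ y.val % 2 = 0))

/-- The chain triangular cactus `T_k`: `k` triangles in a chain, the `i`-th triangle
having vertices `2i, 2i+1, 2i+2` and sharing cut-vertices with its neighbours. -/
def chainTriangularCactus (k : ℕ) : SimpleGraph (Fin (2 * k + 1)) :=
  SimpleGraph.fromRel (fun x y => y.val = x.val + 1 ∨ (y.val = x.val + 2 ∧ x.val % 2 = 0))

/-- The complete bipartite graph `K_{m,n}` on `Fin (m+n)`, with parts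
`{0,…,m-1}` and `{m,…,m+n-1}`. -/
def completeBipartite (m n : ℕ) : SimpleGraph (Fin (m + n)) :=
  SimpleGraph.fromRel (fun x y => x.val < m ∧ m ≤ y.val)

/-!
A perfect matching `μ` of `G`, viewed as a fixed-point-free involution along edges, lifts to
`G^{1/k}` for odd `k`. The path replacing a matched edge has `k + 1` vertices and is covered by
its 1st, 3rd, …, `k`-th edges; the path replacing any other edge has `k - 1` internal vertices,
covered by its 2nd, 4th, …, `(k-1)`-th edges. `K_{m,m}` has the perfect matching `i ↔ i + m`,
so the matching number of its subdivision is half its number `2m + m²(k-1)` of vertices.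
-/

namespace SimpleGraph

variable {V : Type*} {G : SimpleGraph V}

lemma Subgraph.IsMatching.ncard_verts [Finite V] {M : G.Subgraph} (h : M.IsMatching) :
    M.verts.ncard = 2 * M.edgeSet.ncard := by
  classical
  have := Fintype.ofFinite V
  have hsum := M.coe.sum_degrees_eq_twice_card_edges
  rw [Finset.sum_congr rfl (g := fun _ => 1) fun v _ => by
    rw [Subgraph.coe_degree]; convert isMatching_iff_forall_degree.1 h v v.2] at hsum
  simp only [Finset.sum_const, Finset.card_univ, smul_eq_mul, mul_one] at hsum
  rw [← M.image_coe_edgeSet_coe,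
    Set.ncard_image_of_injective _ (Sym2.map.injective Subtype.coe_injective),
    Set.ncard_eq_toFinset_card', Set.toFinset_card, hsum, Set.ncard_eq_toFinset_card']
  simp [edgeFinset]

lemma Subgraph.IsPerfectMatching.two_mul_matchingNumber [Finite V] {M : G.Subgraph}
    (hM : M.IsPerfectMatching) : 2 * matchingNumber G = Nat.card V := by
  have hmax : IsGreatest {n | ∃ M' : G.Subgraph, M'.IsMatching ∧ M'.edgeSet.ncard = n}
      M.edgeSet.ncard := by
    refine ⟨⟨M, hM.1, rfl⟩, ?_⟩
    rintro _ ⟨M', hM', rfl⟩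
    have := Set.ncard_le_ncard (Set.subset_univ M'.verts)
    rw [← hM.2.verts_eq_univ, hM.1.ncard_verts, hM'.ncard_verts] at this
    omega
  rw [matchingNumber, hmax.csSup_eq, ← hM.1.ncard_verts, hM.2.verts_eq_univ, Set.ncard_univ]

lemma exists_isPerfectMatching_of_involutive {f : V → V} (hf : Function.Involutive f)
    (hadj : ∀ v, G.Adj v (f v)) : ∃ M : G.Subgraph, M.IsPerfectMatching := by
  refine ⟨{ verts := Set.univ
            Adj := fun v w => w = f v
            adj_sub := by rintro v _ rfl; exact hadj v
            edge_vert := fun _ => Set.mem_univ _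
            symm := ⟨fun v w h => by rw [h, hf v]⟩ }, ?_⟩
  rw [Subgraph.isPerfectMatching_iff]
  exact fun v => ⟨f v, rfl, fun _ h => h⟩

end SimpleGraph

namespace subdivision

variable {V : Type*} [LinearOrder V] {G : SimpleGraph V} {n : ℕ}

def pathVertex (n : ℕ) (e : {e : V × V // e.1 < e.2 ∧ G.Adj e.1 e.2}) (p : ℕ) :
    V ⊕ ({e : V × V // e.1 < e.2 ∧ G.Adj e.1 e.2} × Fin (n - 1)) :=
  if h0 : p = 0 then .inl e.1.1 else if h : p < n then .inr (e, ⟨p - 1, by omega⟩) else .inl e.1.2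

section pathVertex

variable (e : {e : V × V // e.1 < e.2 ∧ G.Adj e.1 e.2})

lemma pathVertex_zero : pathVertex n e 0 = .inl e.1.1 := rfl

lemma pathVertex_of_pos_of_lt {p : ℕ} (hp0 : 0 < p) (hpn : p < n) :
    pathVertex n e p = .inr (e, ⟨p - 1, by omega⟩) := by
  simp [pathVertex, hp0.ne', hpn]

lemma pathVertex_of_le {p : ℕ} (hp0 : p ≠ 0) (hnp : n ≤ p) : pathVertex n e p = .inl e.1.2 := by
  simp [pathVertex, hp0, hnp]

lemma adj_pathVertex_succ {p : ℕ} (hp : p < n) :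
    (subdivision G n).Adj (pathVertex n e p) (pathVertex n e (p + 1)) := by
  rcases Nat.eq_zero_or_pos p with rfl | hp0
  · rcases (Nat.one_le_iff_ne_zero.2 (by omega) : 1 ≤ n).eq_or_lt with rfl | hn
    · rw [zero_add, pathVertex_zero, pathVertex_of_le e one_ne_zero le_rfl]
      exact ⟨rfl, e.2.2⟩
    · rw [zero_add, pathVertex_zero, pathVertex_of_pos_of_lt e one_pos hn]
      exact .inl ⟨rfl, rfl⟩
  · rcases (Nat.succ_le_of_lt hp).eq_or_lt with hpn | hpn
    · rw [pathVertex_of_pos_of_lt e hp0 hp, pathVertex_of_le e p.succ_ne_zero hpn.ge]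
      exact .inr ⟨show p - 1 = n - 2 by omega, rfl⟩
    · rw [pathVertex_of_pos_of_lt e hp0 hp, pathVertex_of_pos_of_lt e (by omega) hpn]
      exact ⟨rfl, .inl (show p - 1 + 1 = p by omega)⟩

lemma adj_pathVertex {p q : ℕ} (hp : p ≤ n) (hq : q ≤ n) (hpq : p + 1 = q ∨ q + 1 = p) :
    (subdivision G n).Adj (pathVertex n e p) (pathVertex n e q) := by
  rcases hpq with rfl | rfl
  · exact adj_pathVertex_succ e (by omega)
  · exact (adj_pathVertex_succ e (by omega)).symm

end pathVertex

variable {μ : V → V} {e : {e : V × V // e.1 < e.2 ∧ G.Adj e.1 e.2}}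

def matchedEdge (hμ : ∀ v, G.Adj v (μ v)) (x : V) : {e : V × V // e.1 < e.2 ∧ G.Adj e.1 e.2} :=
  if h : x < μ x then ⟨(x, μ x), h, hμ x⟩
  else ⟨(μ x, x), lt_of_le_of_ne (not_lt.1 h) (hμ x).ne', (hμ x).symm⟩

lemma matchedEdge_fst (hμ : ∀ v, G.Adj v (μ v)) (he : μ e.1.1 = e.1.2) :
    matchedEdge hμ e.1.1 = e := by
  simp [matchedEdge, he, e.2.1]

lemma matchedEdge_snd (hμ : ∀ v, G.Adj v (μ v)) (he : μ e.1.2 = e.1.1) :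
    matchedEdge hμ e.1.2 = e := by
  simp [matchedEdge, he, not_lt_of_gt e.2.1]

def offset (μ : V → V) (e : {e : V × V // e.1 < e.2 ∧ G.Adj e.1 e.2}) : ℕ :=
  if μ e.1.1 = e.1.2 then 0 else 1

lemma offset_lt_two : offset μ e < 2 := by
  unfold offset; split_ifs <;> omega

/-- On a path of offset `0` the positions are paired `0-1, 2-3, …, (n-1)-n`; on a path of
offset `1` the internal positions are paired `1-2, 3-4, …, (n-2)-(n-1)`. -/
def pairedPos (b p : ℕ) : ℕ := if p % 2 = b then p + 1 else p - 1

lemma pairedPos_spec (hn : Odd n) {b p : ℕ} (hb : b < 2) (hp : p ≤ n)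
    (hp' : b = 1 → 0 < p ∧ p < n) :
    (pairedPos b p ≤ n ∧ (b = 1 → 0 < pairedPos b p ∧ pairedPos b p < n)) ∧
      pairedPos b (pairedPos b p) = p ∧ (p + 1 = pairedPos b p ∨ pairedPos b p + 1 = p) := by
  obtain ⟨t, rfl⟩ := hn
  unfold pairedPos
  split_ifs <;> omega

def partner (hμ : ∀ v, G.Adj v (μ v)) (n : ℕ) :
    V ⊕ ({e : V × V // e.1 < e.2 ∧ G.Adj e.1 e.2} × Fin (n - 1)) →
      V ⊕ ({e : V × V // e.1 < e.2 ∧ G.Adj e.1 e.2} × Fin (n - 1))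
  | .inl x => pathVertex n (matchedEdge hμ x) (if x < μ x then 1 else n - 1)
  | .inr (e, i) => pathVertex n e (pairedPos (offset μ e) (i + 1))

lemma partner_pathVertex (hinv : Function.Involutive μ) (hμ : ∀ v, G.Adj v (μ v)) (hn : Odd n)
    {p : ℕ} (hp : p ≤ n) (hp' : offset μ e = 1 → 0 < p ∧ p < n) :
    partner hμ n (pathVertex n e p) = pathVertex n e (pairedPos (offset μ e) p) := by
  rcases Nat.eq_zero_or_pos p with rfl | hp0
  · have he : μ e.1.1 = e.1.2 := by by_contra he; simp [offset, he] at hp'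
    simp only [pathVertex_zero, partner, matchedEdge_fst hμ he]
    simp [he, e.2.1, offset, pairedPos]
  rcases hp.eq_or_lt with rfl | hpn
  · have he : μ e.1.1 = e.1.2 := by by_contra he; simp [offset, he] at hp'
    have he' : μ e.1.2 = e.1.1 := he ▸ hinv _
    rw [pathVertex_of_le e hp0.ne' le_rfl]
    simp only [partner, matchedEdge_snd hμ he']
    simp [he', not_lt_of_gt e.2.1, offset, he, pairedPos, Nat.odd_iff.1 hn]
  · rw [pathVertex_of_pos_of_lt e hp0 hpn]
    simp [partner, Nat.sub_add_cancel hp0]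

lemma exists_eq_pathVertex (hinv : Function.Involutive μ) (hμ : ∀ v, G.Adj v (μ v)) (hn : Odd n)
    (v : V ⊕ ({e : V × V // e.1 < e.2 ∧ G.Adj e.1 e.2} × Fin (n - 1))) :
    ∃ e p, p ≤ n ∧ (offset μ e = 1 → 0 < p ∧ p < n) ∧ v = pathVertex n e p := by
  rcases v with x | ⟨e, i⟩
  · have hoff : offset μ (matchedEdge hμ x) = 0 := by
      unfold matchedEdge; split_ifs <;> simp [offset, hinv x]
    refine ⟨matchedEdge hμ x, if x < μ x then 0 else n, by split_ifs <;> omega,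
      by simp [hoff], ?_⟩
    split_ifs with h
    · simp [pathVertex_zero, matchedEdge, h]
    · rw [pathVertex_of_le _ hn.pos.ne' le_rfl]
      simp [matchedEdge, h]
  · refine ⟨e, i + 1, by omega, fun _ => ⟨by omega, by omega⟩, ?_⟩
    rw [pathVertex_of_pos_of_lt e i.val.succ_pos (by omega)]
    rfl

end subdivision

open subdivision in
theorem exists_isPerfectMatching_subdivision {V : Type*} [LinearOrder V] {G : SimpleGraph V}
    {μ : V → V} (hinv : Function.Involutive μ) (hμ : ∀ v, G.Adj v (μ v)) {n : ℕ} (hn : Odd n) :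
    ∃ M : (subdivision G n).Subgraph, M.IsPerfectMatching := by
  have key : ∀ v, partner hμ n (partner hμ n v) = v ∧ (subdivision G n).Adj v (partner hμ n v) := by
    intro v
    obtain ⟨e, p, hp, hp', rfl⟩ := exists_eq_pathVertex hinv hμ hn v
    obtain ⟨⟨hq, hq'⟩, hqq, hpq⟩ := pairedPos_spec hn offset_lt_two hp hp'
    rw [partner_pathVertex hinv hμ hn hp hp', partner_pathVertex hinv hμ hn hq hq', hqq]
    exact ⟨rfl, adj_pathVertex e hp hq hpq⟩
  exact exists_isPerfectMatching_of_involutive (fun v => (key v).1) (fun v => (key v).2)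

lemma completeBipartite_lt_adj_iff {m : ℕ} (x y : Fin (m + m)) :
    (x < y ∧ (completeBipartite m m).Adj x y) ↔ (x.val < m ∧ m ≤ y.val) := by
  rw [completeBipartite, fromRel_adj, Fin.lt_def, ← Fin.val_ne_iff]
  omega

def completeBipartiteEdgeEquiv (m : ℕ) :
    {e : Fin (m + m) × Fin (m + m) // e.1 < e.2 ∧ (completeBipartite m m).Adj e.1 e.2}
      ≃ Fin m × Fin m where
  toFun e := (⟨e.1.1, ((completeBipartite_lt_adj_iff _ _).1 e.2).1⟩,
    ⟨e.1.2 - m, by have := ((completeBipartite_lt_adj_iff _ _).1 e.2).2; omega⟩)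
  invFun p := ⟨(p.1.castAdd m, p.2.natAdd m), (completeBipartite_lt_adj_iff _ _).2 (by simp)⟩
  left_inv e := by
    have := (completeBipartite_lt_adj_iff _ _).1 e.2
    ext <;> simp only [Fin.val_castAdd, Fin.val_natAdd]
    omega
  right_inv p := by ext <;> simp

def swapHalves {m : ℕ} (x : Fin (m + m)) : Fin (m + m) :=
  if h : x.val < m then ⟨x + m, by omega⟩ else ⟨x - m, by omega⟩

lemma val_swapHalves {m : ℕ} (x : Fin (m + m)) :
    (swapHalves x).val = if x.val < m then x.val + m else x.val - m := by
  unfold swapHalves; split_ifs <;> rfl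

lemma swapHalves_involutive (m : ℕ) : Function.Involutive (swapHalves (m := m)) := by
  intro x; ext; simp only [val_swapHalves]; split_ifs <;> omega

lemma completeBipartite_adj_swapHalves {m : ℕ} (x : Fin (m + m)) :
    (completeBipartite m m).Adj x (swapHalves x) := by
  rw [completeBipartite, fromRel_adj, ← Fin.val_ne_iff, val_swapHalves]; split_ifs <;> omega

theorem stmt12_general (m k : ℕ) (hk : Odd k) :
    matchingNumber (subdivision (completeBipartite m m) k)
      = m * ((k + 1) / 2) + m * (m - 1) * ((k - 1) / 2) := by
  obtain ⟨M, hM⟩ := exists_isPerfectMatching_subdivision (swapHalves_involutive m)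
    completeBipartite_adj_swapHalves hk
  have hcard := hM.two_mul_matchingNumber
  rw [Nat.card_sum, Nat.card_prod, Nat.card_congr (completeBipartiteEdgeEquiv m), Nat.card_prod]
    at hcard
  simp only [Nat.card_eq_fintype_card, Fintype.card_fin] at hcard
  obtain ⟨t, rfl⟩ := hk
  rcases m with _ | m
  · omega
  · simp only [Nat.add_sub_cancel, show (2 * t + 1 + 1) / 2 = t + 1 by omega,
      show (2 * t) / 2 = t by omega] at hcard ⊢
    linarith

theorem stmt12 (m k : ℕ) (hm : 1 ≤ m) (hk : Odd k) :
    matchingNumber (subdivision (completeBipartite m m) k)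
      = m * ((k + 1) / 2) + m * (m - 1) * ((k - 1) / 2) :=
  stmt12_general m k hk
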